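/- arXiv:2010.04057 — 5 statements merged into one kernel-verified Lean document; each statement's English description precedes it below -/
import Mathlib

section
/- Let N be a positive natural number and c : ZMod N → ℂ, and let C be the circulant matrix with C i j = c (i − j). Define the (unnormalized) DFT matrix F : Matrix (ZMod N) (ZMod N) ℂ by F l j = exp(−2πi·(l.val · j.val)/N), and define λ : ZMod N → ℂ by λ l = ∑_{k ∈ ZMod N} c k · exp(−2πi·(l.val · k.val)/N). Then F * C = (Matrix.diagonal λ) * F. In other words, the DFT matrix diagonalizes every circulant matrix, with the eigenvalues given by the DFT of the first column. -/
open Matrix Complex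

private lemma zpow_mod_aux {ζ : ℂ} {N : ℕ} (hζ : ζ ^ N = 1) (a : ℕ) :
    ζ ^ a = ζ ^ (a % N) := by
  conv_lhs => rw [← Nat.div_add_mod a N]
  rw [pow_add, pow_mul, hζ, one_pow, one_mul]

private lemma exp_eq_zeta_pow (N : ℕ) [NeZero N] (a : ℕ) :
    Complex.exp (-(2 * Real.pi * Complex.I * (a : ℂ)) / (N : ℂ)) =
      Complex.exp (-(2 * Real.pi * Complex.I) / (N : ℂ)) ^ a := by
  rw [← Complex.exp_nat_mul]
  congr 1
  have hN : (N : ℂ) ≠ 0 := Nat.cast_ne_zero.mpr (NeZero.ne N)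
  ring

private lemma exp_add_char (N : ℕ) [NeZero N] (l a b : ZMod N) :
    Complex.exp (-(2 * Real.pi * Complex.I * ((l.val : ℂ) * (((a + b : ZMod N)).val : ℂ))) / (N : ℂ)) =
    Complex.exp (-(2 * Real.pi * Complex.I * ((l.val : ℂ) * (a.val : ℂ))) / (N : ℂ)) *
    Complex.exp (-(2 * Real.pi * Complex.I * ((l.val : ℂ) * (b.val : ℂ))) / (N : ℂ)) := by
  have hN : (N : ℂ) ≠ 0 := Nat.cast_ne_zero.mpr (NeZero.ne N)
  set ζ : ℂ := Complex.exp (-(2 * Real.pi * Complex.I) / (N : ℂ)) with hζdef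
  have hζ : ζ ^ N = 1 := by
    rw [hζdef, ← Complex.exp_nat_mul]
    have : (N : ℂ) * (-(2 * Real.pi * Complex.I) / (N : ℂ)) = -(2 * Real.pi * Complex.I) := by
      field_simp
    rw [this]
    simpa using Complex.exp_int_mul_two_pi_mul_I (-1)
  have key : ∀ x y : ZMod N,
      Complex.exp (-(2 * Real.pi * Complex.I * ((x.val : ℂ) * (y.val : ℂ))) / (N : ℂ)) =
        ζ ^ (x.val * y.val) := by
    intro x y
    have := exp_eq_zeta_pow N (x.val * y.val)
    push_cast at this ⊢
    exact this
  rw [key, key, key, ← pow_add]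
  rw [zpow_mod_aux hζ (l.val * (a+b).val), zpow_mod_aux hζ (l.val * a.val + l.val * b.val)]
  congr 1
  have : (a + b).val % N = (a.val + b.val) % N := by
    rw [ZMod.val_add, Nat.mod_mod_of_dvd _ dvd_rfl]
  rw [Nat.mul_mod, this, ← Nat.mul_mod, Nat.mul_add]

/-- The DFT matrix diagonalizes every circulant matrix, with the eigenvalues
given by the DFT of the first column. -/
theorem dft_mul_circulant_eq_diagonal_mul_dft
    (N : ℕ) [NeZero N] (c : ZMod N → ℂ)
    (C : Matrix (ZMod N) (ZMod N) ℂ) (hC : ∀ i j, C i j = c (i - j))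
    (F : Matrix (ZMod N) (ZMod N) ℂ)
    (hF : ∀ l j, F l j =
      Complex.exp (-(2 * Real.pi * Complex.I * ((l.val : ℂ) * (j.val : ℂ))) / (N : ℂ)))
    (lam : ZMod N → ℂ)
    (hlam : ∀ l, lam l = ∑ k : ZMod N, c k *
      Complex.exp (-(2 * Real.pi * Complex.I * ((l.val : ℂ) * (k.val : ℂ))) / (N : ℂ))) :
    F * C = Matrix.diagonal lam * F := by
  ext l j
  rw [Matrix.mul_apply, Matrix.diagonal_mul]
  have reindex : ∑ k : ZMod N, F l k * C k j = ∑ m : ZMod N, F l (m + j) * C (m + j) j :=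
    (Fintype.sum_equiv (Equiv.addRight j) _ _ (fun m => rfl)).symm
  rw [reindex]
  have : ∀ m : ZMod N, F l (m + j) * C (m + j) j =
      (c m * Complex.exp (-(2 * Real.pi * Complex.I * ((l.val : ℂ) * (m.val : ℂ))) / (N : ℂ))) * F l j := by
    intro m
    rw [hC, add_sub_cancel_right, hF, hF, exp_add_char]
    ring
  rw [Finset.sum_congr rfl (fun m _ => this m), ← Finset.sum_mul, hlam l]
end

section
/- Let r, t, m be positive natural numbers, let D : Matrix (Fin r × Fin m) (Fin t × Fin m) ℂ have diagonal blocks, and let ρ be a positive real number. Then the matrix Dᴴ * D + ρ • 1 (where 1 is the identity matrix indexed by Fin t × Fin m) is positive definite, hence invertible, and its inverse (Dᴴ * D + ρ • 1)⁻¹ has diagonal blocks. -/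
open Matrix
open scoped ComplexOrder

/-!
A matrix indexed by `Fin a × Fin m` has diagonal blocks exactly when it is `blockDiagonal f`
for the family `f` of its blocks read along the second coordinate. Such matrices are closed
under `Dᴴ * E`, sums and scalar identities, and inversion acts blockwise (a singular matrix has
the junk inverse `0`, which is trivially block diagonal), so `(Dᴴ * D + ρ • 1)⁻¹` keeps the
pattern; positive definiteness is that of a Gram matrix plus a positive multiple of `1`.
-/

/-- A block matrix (with `m × m` blocks) has diagonal blocks if every off-diagonal
entry of every block vanishes. -/
def HasDiagonalBlocks {a b m : ℕ} (X : Matrix (Fin a × Fin m) (Fin b × Fin m) ℂ) : Prop :=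
  ∀ (i : Fin a) (p : Fin m) (j : Fin b) (q : Fin m), p ≠ q → X (i, p) (j, q) = 0

theorem Matrix.posDef_conjTranspose_mul_self_add_smul_one {n m 𝕜 : Type*} [Fintype n]
    [Fintype m] [DecidableEq n] [RCLike 𝕜] (D : Matrix m n 𝕜) {ρ : ℝ} (hρ : 0 < ρ) :
    (Dᴴ * D + (ρ : 𝕜) • 1).PosDef :=
  PosDef.posSemidef_add (posSemidef_conjTranspose_mul_self D)
    (PosDef.one.smul (by exact_mod_cast hρ))

theorem Matrix.inv_blockDiagonal {o n α : Type*} [Fintype o] [DecidableEq o] [Fintype n]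
    [DecidableEq n] [CommRing α] (f : o → Matrix n n α) (hf : IsUnit (blockDiagonal f).det) :
    (blockDiagonal f)⁻¹ = blockDiagonal fun k => (f k)⁻¹ := by
  rw [det_blockDiagonal, IsUnit.prod_iff] at hf
  refine inv_eq_right_inv ?_
  rw [← blockDiagonal_mul, ← blockDiagonal_one]
  exact congrArg blockDiagonal (funext fun k => mul_nonsing_inv _ (hf k (Finset.mem_univ k)))

section HasDiagonalBlocks

variable {a b c m : ℕ}

theorem hasDiagonalBlocks_blockDiagonal (f : Fin m → Matrix (Fin a) (Fin b) ℂ) :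
    HasDiagonalBlocks (blockDiagonal f) :=
  fun _ _ _ _ hpq => blockDiagonal_apply_ne f _ _ hpq

theorem HasDiagonalBlocks.blockDiagonal_blockDiag {X : Matrix (Fin a × Fin m) (Fin b × Fin m) ℂ}
    (hX : HasDiagonalBlocks X) : blockDiagonal (blockDiag X) = X := by
  ext ⟨i, p⟩ ⟨j, q⟩
  by_cases hpq : p = q
  · subst hpq
    rw [blockDiagonal_apply_eq, blockDiag_apply]
  · rw [blockDiagonal_apply_ne _ _ _ hpq, hX i p j q hpq]

theorem HasDiagonalBlocks.conjTranspose_mul {D : Matrix (Fin a × Fin m) (Fin b × Fin m) ℂ}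
    {E : Matrix (Fin a × Fin m) (Fin c × Fin m) ℂ} (hD : HasDiagonalBlocks D)
    (hE : HasDiagonalBlocks E) : HasDiagonalBlocks (Dᴴ * E) := by
  rw [← hD.blockDiagonal_blockDiag, ← hE.blockDiagonal_blockDiag, blockDiagonal_conjTranspose,
    ← blockDiagonal_mul]
  exact hasDiagonalBlocks_blockDiagonal _

theorem HasDiagonalBlocks.add {X Y : Matrix (Fin a × Fin m) (Fin b × Fin m) ℂ}
    (hX : HasDiagonalBlocks X) (hY : HasDiagonalBlocks Y) : HasDiagonalBlocks (X + Y) :=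
  fun i p j q hpq => by rw [Matrix.add_apply, hX i p j q hpq, hY i p j q hpq, add_zero]

theorem hasDiagonalBlocks_smul_one (z : ℂ) :
    HasDiagonalBlocks (z • (1 : Matrix (Fin a × Fin m) (Fin a × Fin m) ℂ)) := by
  rw [← blockDiagonal_one, ← blockDiagonal_smul]
  exact hasDiagonalBlocks_blockDiagonal _

theorem HasDiagonalBlocks.inv {X : Matrix (Fin a × Fin m) (Fin a × Fin m) ℂ}
    (hX : HasDiagonalBlocks X) : HasDiagonalBlocks X⁻¹ := by
  by_cases hdet : IsUnit X.det
  · rw [← hX.blockDiagonal_blockDiag] at hdet ⊢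
    rw [inv_blockDiagonal _ hdet]
    exact hasDiagonalBlocks_blockDiagonal _
  · rw [nonsing_inv_apply_not_isUnit X hdet]
    exact fun _ _ _ _ _ => rfl

end HasDiagonalBlocks

theorem regularized_gram_posDef_isUnit_inv_hasDiagonalBlocks_general
    (r t m : ℕ)
    (D : Matrix (Fin r × Fin m) (Fin t × Fin m) ℂ)
    (hD : HasDiagonalBlocks D) (ρ : ℝ) (hρ : 0 < ρ) :
    (Dᴴ * D + (ρ : ℂ) • 1).PosDef ∧ IsUnit (Dᴴ * D + (ρ : ℂ) • 1).det ∧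
      HasDiagonalBlocks (Dᴴ * D + (ρ : ℂ) • 1)⁻¹ := by
  have hpos := posDef_conjTranspose_mul_self_add_smul_one D hρ
  refine ⟨hpos, (isUnit_iff_isUnit_det _).mp hpos.isUnit, ?_⟩
  exact ((hD.conjTranspose_mul hD).add (hasDiagonalBlocks_smul_one _)).inv

/-- If `D` has diagonal blocks and `ρ > 0` then `Dᴴ * D + ρ • 1` is positive
definite, hence invertible, and its inverse has diagonal blocks. -/
theorem regularized_gram_posDef_isUnit_inv_hasDiagonalBlocks
    (r t m : ℕ) (hr : 0 < r) (ht : 0 < t) (hm : 0 < m)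
    (D : Matrix (Fin r × Fin m) (Fin t × Fin m) ℂ)
    (hD : HasDiagonalBlocks D) (ρ : ℝ) (hρ : 0 < ρ) :
    (Dᴴ * D + (ρ : ℂ) • 1).PosDef ∧ IsUnit (Dᴴ * D + (ρ : ℂ) • 1).det ∧
      HasDiagonalBlocks (Dᴴ * D + (ρ : ℂ) • 1)⁻¹ :=
  regularized_gram_posDef_isUnit_inv_hasDiagonalBlocks_general r t m D hD ρ hρ
end

section
/- Let m and n be finite types, let U : Matrix m m ℂ and V : Matrix n n ℂ be unitary (Uᴴ * U = 1 = U * Uᴴ and Vᴴ * V = 1 = V * Vᴴ), let D : Matrix m n ℂ, and set H = Uᴴ * D * V. If Dᴴ * D is invertible, then Hᴴ * H is invertible and the zero-forcing receiver matrix satisfies H * (Hᴴ * H)⁻¹ = Uᴴ * D * (Dᴴ * D)⁻¹ * V. That is, the low-complexity ZF receiver computed from the eigenvalue matrix D yields exactly the same matrix as the conventional ZF receiver computed from H. -/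
open Matrix

/-- The low-complexity ZF receiver computed from the eigenvalue matrix `D` yields
exactly the same matrix as the conventional ZF receiver computed from
`H = Uᴴ * D * V`. -/
theorem lowComplexity_ZF_receiver_eq
    {m n : Type*} [Fintype m] [Fintype n] [DecidableEq m] [DecidableEq n]
    (U : Matrix m m ℂ) (hU₁ : Uᴴ * U = 1) (hU₂ : U * Uᴴ = 1)
    (V : Matrix n n ℂ) (hV₁ : Vᴴ * V = 1) (hV₂ : V * Vᴴ = 1)
    (D : Matrix m n ℂ) (H : Matrix m n ℂ) (hH : H = Uᴴ * D * V)
    (hDD : IsUnit (Dᴴ * D).det) :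
    IsUnit (Hᴴ * H).det ∧ H * (Hᴴ * H)⁻¹ = Uᴴ * D * (Dᴴ * D)⁻¹ * V := by
  have key : Hᴴ * H = Vᴴ * (Dᴴ * D) * V := by
    subst hH
    simp only [conjTranspose_mul, conjTranspose_conjTranspose, Matrix.mul_assoc]
    rw [show U * (Uᴴ * (D * V)) = (U * Uᴴ) * (D * V) by rw [Matrix.mul_assoc], hU₂,
      Matrix.one_mul]
  have hVdet : Vᴴ.det * V.det = 1 := by rw [← det_mul, hV₁, det_one]
  have hdet : IsUnit (Hᴴ * H).det := by
    rw [key, det_mul, det_mul, mul_comm Vᴴ.det, mul_assoc, hVdet, mul_one]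
    exact hDD
  refine ⟨hdet, ?_⟩
  have hinv : (Hᴴ * H)⁻¹ = Vᴴ * (Dᴴ * D)⁻¹ * V := by
    apply inv_eq_right_inv
    rw [key]
    calc Vᴴ * (Dᴴ * D) * V * (Vᴴ * (Dᴴ * D)⁻¹ * V)
        = Vᴴ * (Dᴴ * D) * (V * Vᴴ) * (Dᴴ * D)⁻¹ * V := by
          simp only [Matrix.mul_assoc]
      _ = 1 := by rw [hV₂, Matrix.mul_one, Matrix.mul_assoc Vᴴ,
            Matrix.mul_nonsing_inv _ hDD, Matrix.mul_one, hV₁]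
  rw [hinv, hH]
  calc Uᴴ * D * V * (Vᴴ * (Dᴴ * D)⁻¹ * V)
      = Uᴴ * D * (V * Vᴴ) * (Dᴴ * D)⁻¹ * V := by simp only [Matrix.mul_assoc]
    _ = Uᴴ * D * (Dᴴ * D)⁻¹ * V := by rw [hV₂, Matrix.mul_one]
end

section
/- Let N_r, N_t, m be positive natural numbers, let (Ω, μ) be a probability space, and let X : Ω → Matrix (Fin N_r × Fin m) (Fin N_t × Fin m) ℂ be a random matrix such that every X ω has diagonal blocks and every entry of X is integrable and square-integrable. Let σ ≥ 0 and suppose the second-moment condition holds: for all i, j ∈ Fin N_r, k, l ∈ Fin N_t and p ∈ Fin m, ∫ conj(X ω (i,p) (k,p)) · (X ω (j,p) (l,p)) dμ = σ² if (i = j and k = l), and = 0 otherwise. Then for every deterministic Y : Matrix (Fin N_r × Fin m) (Fin N_r × Fin m) ℂ with diagonal blocks, the entrywise expectation satisfies: for all k, l ∈ Fin N_t and p, q ∈ Fin m, ∫ ((X ω)ᴴ * Y * (X ω)) (k,p) (l,q) dμ equals σ² · ∑_{i ∈ Fin N_r} Y (i,p) (i,p) if (k = l and p = q), and equals 0 otherwise.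 That is, E[Xᴴ Y X] = σ² · ∑_i (I_{N_t} ⊗ Y_{i,i}), a block diagonal matrix with N_t copies of the diagonal matrix ∑_i Y_{i,i}. -/
open Matrix MeasureTheory
open scoped ComplexConjugate

theorem HasDiagonalBlocks.conjTranspose_mul_mul_apply {a b c d m : ℕ}
    {X : Matrix (Fin a × Fin m) (Fin b × Fin m) ℂ} {Z : Matrix (Fin c × Fin m) (Fin d × Fin m) ℂ}
    (hX : HasDiagonalBlocks X) (hZ : HasDiagonalBlocks Z)
    (Y : Matrix (Fin a × Fin m) (Fin c × Fin m) ℂ) (k : Fin b) (l : Fin d) (p q : Fin m) :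
    (Xᴴ * Y * Z) (k, p) (l, q) =
      ∑ j, ∑ i, conj (X (i, p) (k, p)) * Y (i, p) (j, q) * Z (j, q) (l, q) := by
  simp only [mul_apply, conjTranspose_apply, Fintype.sum_prod_type, Finset.sum_mul]
  refine Finset.sum_congr rfl fun j _ => ?_
  rw [Finset.sum_eq_single q (fun s _ hs => Finset.sum_eq_zero fun i _ => by simp [hZ j s l q hs])
    (by simp)]
  refine Finset.sum_congr rfl fun i _ => ?_
  rw [Finset.sum_eq_single p (fun r _ hr => by simp [hX i r k p hr]) (by simp)]
  rfl

theorem integral_sum_sum_conj_mul_mul {Ω ι κ : Type*} [MeasurableSpace Ω] {μ : Measure Ω}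
    [Fintype ι] [Fintype κ] {f : ι → Ω → ℂ} {g : κ → Ω → ℂ}
    (hf : ∀ i, MemLp (f i) 2 μ) (hg : ∀ j, MemLp (g j) 2 μ) (c : ι → κ → ℂ) :
    ∫ ω, ∑ j, ∑ i, conj (f i ω) * c i j * g j ω ∂μ =
      ∑ j, ∑ i, c i j * ∫ ω, conj (f i ω) * g j ω ∂μ := by
  have hint i j : Integrable (fun ω => conj (f i ω) * g j ω * c i j) μ :=
    ((hf i).star.integrable_mul (hg j)).mul_const _
  simp_rw [mul_right_comm _ (c _ _)]
  rw [integral_finsetSum _ fun j _ => integrable_finsetSum _ fun i _ => hint i j]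
  refine Finset.sum_congr rfl fun j _ => ?_
  rw [integral_finsetSum _ fun i _ => hint i j]
  simp_rw [integral_mul_const, mul_comm _ (c _ _)]

theorem expectation_conjTranspose_mul_mul_general
    (N_r N_t m : ℕ)
    {Ω : Type*} [MeasurableSpace Ω] (μ : Measure Ω)
    (X : Ω → Matrix (Fin N_r × Fin m) (Fin N_t × Fin m) ℂ)
    (hdiag : ∀ ω, HasDiagonalBlocks (X ω))
    (hsq : ∀ u v, MemLp (fun ω => X ω u v) 2 μ)
    (σ : ℝ)
    (hmom : ∀ (i j : Fin N_r) (k l : Fin N_t) (p : Fin m),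
      ∫ ω, conj (X ω (i, p) (k, p)) * X ω (j, p) (l, p) ∂μ =
        if i = j ∧ k = l then ((σ : ℂ) ^ 2) else 0)
    (Y : Matrix (Fin N_r × Fin m) (Fin N_r × Fin m) ℂ) (hY : HasDiagonalBlocks Y) :
    ∀ (k l : Fin N_t) (p q : Fin m),
      ∫ ω, ((X ω)ᴴ * Y * X ω) (k, p) (l, q) ∂μ =
        if k = l ∧ p = q then ((σ : ℂ) ^ 2) * ∑ i : Fin N_r, Y (i, p) (i, p) else 0 := by
  intro k l p q
  simp_rw [(hdiag _).conjTranspose_mul_mul_apply (hdiag _)]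
  by_cases hpq : p = q
  · subst hpq
    rw [integral_sum_sum_conj_mul_mul (fun i => hsq (i, p) (k, p)) (fun j => hsq (j, p) (l, p))]
    simp only [hmom]
    obtain rfl | hkl := eq_or_ne k l
    · simp [Finset.mul_sum, mul_comm]
    · simp [hkl]
  · simp [hY _ _ _ _ hpq, hpq]

/-- For a random block matrix `X` with diagonal blocks and i.i.d.-type second
moments, `E[Xᴴ Y X] = σ² ∑ᵢ (I ⊗ Y i i)` for every deterministic `Y` with
diagonal blocks. -/
theorem expectation_conjTranspose_mul_mul
    (N_r N_t m : ℕ) (hNr : 0 < N_r) (hNt : 0 < N_t) (hm : 0 < m)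
    {Ω : Type*} [MeasurableSpace Ω] (μ : Measure Ω) [IsProbabilityMeasure μ]
    (X : Ω → Matrix (Fin N_r × Fin m) (Fin N_t × Fin m) ℂ)
    (hdiag : ∀ ω, HasDiagonalBlocks (X ω))
    (hint : ∀ u v, Integrable (fun ω => X ω u v) μ)
    (hsq : ∀ u v, MemLp (fun ω => X ω u v) 2 μ)
    (σ : ℝ) (hσ : 0 ≤ σ)
    (hmom : ∀ (i j : Fin N_r) (k l : Fin N_t) (p : Fin m),
      ∫ ω, conj (X ω (i, p) (k, p)) * X ω (j, p) (l, p) ∂μ =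
        if i = j ∧ k = l then ((σ : ℂ) ^ 2) else 0)
    (Y : Matrix (Fin N_r × Fin m) (Fin N_r × Fin m) ℂ) (hY : HasDiagonalBlocks Y) :
    ∀ (k l : Fin N_t) (p q : Fin m),
      ∫ ω, ((X ω)ᴴ * Y * X ω) (k, p) (l, q) ∂μ =
        if k = l ∧ p = q then ((σ : ℂ) ^ 2) * ∑ i : Fin N_r, Y (i, p) (i, p) else 0 :=
  expectation_conjTranspose_mul_mul_general N_r N_t m μ X hdiag hsq σ hmom Y hY
end

section
/- Let N_r, N_t, m be positive natural numbers, let (Ω, μ) be a probability space, and let X : Ω → Matrix (Fin N_r × Fin m) (Fin N_t × Fin m) ℂ be a random matrix such that every X ω has diagonal blocks and every entry of X is integrable and square-integrable. Let σ ≥ 0 and suppose the second-moment condition holds: for all i, j ∈ Fin N_r, k, l ∈ Fin N_t and p ∈ Fin m, ∫ (X ω (i,p) (k,p)) · conj(X ω (j,p) (l,p)) dμ = σ² if (i = j and k = l), and = 0 otherwise. Then for every deterministic Z : Matrix (Fin N_t × Fin m) (Fin N_t × Fin m) ℂ with diagonal blocks, the entrywise expectation satisfies: for all i, j ∈ Fin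 N_r and p, q ∈ Fin m, ∫ ((X ω) * Z * (X ω)ᴴ) (i,p) (j,q) dμ equals σ² · ∑_{k ∈ Fin N_t} Z (k,p) (k,p) if (i = j and p = q), and equals 0 otherwise. That is, E[X Z Xᴴ] = σ² · ∑_k (I_{N_r} ⊗ Z_{k,k}), a block diagonal matrix with N_r copies of the diagonal matrix ∑_k Z_{k,k}. -/
open Matrix MeasureTheory
open scoped ComplexConjugate

/-!
Expanding `(X Z Xᴴ) (i,p) (j,q)` as a double sum over the entries of `Z`, the diagonal-block
structure of `X` and `Z` kills every term unless `p = q`, and then only entries within the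
`p`-th diagonal position survive. Taking expectations termwise (each product of two
square-integrable entries is integrable), the second-moment condition keeps exactly the
terms `k = l`, `i = j`, each contributing `σ² Z (k,p) (k,p)`.
-/

lemma Matrix.mul_mul_conjTranspose_apply {R ι κ κ' ν : Type*} [NonUnitalSemiring R] [Star R]
    [Fintype κ] [Fintype κ'] (A : Matrix ι κ R) (Z : Matrix κ κ' R) (B : Matrix ν κ' R)
    (a : ι) (b : ν) :
    (A * Z * Bᴴ) a b = ∑ u, ∑ v, A a u * Z u v * star (B b v) := by
  simp only [mul_apply, conjTranspose_apply, Finset.sum_mul]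
  exact Finset.sum_comm

lemma Fintype.sum_prod_eq_sum_of_snd_ne {α β M : Type*} [Fintype α] [Fintype β]
    [AddCommMonoid M] (f : α × β → M) (b : β) (hf : ∀ a b', b' ≠ b → f (a, b') = 0) :
    ∑ x, f x = ∑ a, f (a, b) := by
  rw [Fintype.sum_prod_type]
  exact Finset.sum_congr rfl fun a _ => Fintype.sum_eq_single b fun b' h => hf a b' h

lemma HasDiagonalBlocks.mul_mul_conjTranspose_apply {a b c d m : ℕ}
    {A : Matrix (Fin a × Fin m) (Fin b × Fin m) ℂ} {Z : Matrix (Fin b × Fin m) (Fin c × Fin m) ℂ}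
    {B : Matrix (Fin d × Fin m) (Fin c × Fin m) ℂ}
    (hA : HasDiagonalBlocks A) (hZ : HasDiagonalBlocks Z) (hB : HasDiagonalBlocks B)
    (i : Fin a) (j : Fin d) (p q : Fin m) :
    (A * Z * Bᴴ) (i, p) (j, q) =
      if p = q then ∑ k, ∑ l, A (i, p) (k, p) * Z (k, p) (l, p) * conj (B (j, p) (l, p))
      else 0 := by
  have hA' : ∀ k r, r ≠ p → ∀ v, A (i, p) (k, r) * Z (k, r) v * star (B (j, q) v) = 0 :=
    fun k r hr v => by rw [hA i p k r (Ne.symm hr), zero_mul, zero_mul]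
  have hB' : ∀ u l s, s ≠ q → A (i, p) u * Z u (l, s) * star (B (j, q) (l, s)) = 0 :=
    fun u l s hs => by rw [hB j q l s (Ne.symm hs), star_zero, mul_zero]
  rw [Matrix.mul_mul_conjTranspose_apply,
    Fintype.sum_prod_eq_sum_of_snd_ne _ p fun k r hr => Finset.sum_eq_zero fun v _ => hA' k r hr v,
    Finset.sum_congr rfl fun k _ => Fintype.sum_prod_eq_sum_of_snd_ne _ q (hB' (k, p))]
  split_ifs with hpq
  · subst hpq; rfl
  · simp [hZ _ p _ q hpq]

lemma integral_sum_sum_mul_mul_conj {Ω ι κ : Type*} [MeasurableSpace Ω] {μ : Measure Ω}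
    [Fintype ι] [Fintype κ] {f : ι → Ω → ℂ} {g : κ → Ω → ℂ}
    (hf : ∀ k, MemLp (f k) 2 μ) (hg : ∀ l, MemLp (g l) 2 μ) (c : ι → κ → ℂ) :
    ∫ ω, ∑ k, ∑ l, f k ω * c k l * conj (g l ω) ∂μ =
      ∑ k, ∑ l, c k l * ∫ ω, f k ω * conj (g l ω) ∂μ := by
  have hint : ∀ k l, Integrable (fun ω => f k ω * conj (g l ω)) μ :=
    fun k l => (hf k).integrable_mul (hg l).star
  simp_rw [mul_right_comm _ (c _ _), mul_comm _ (c _ _)]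
  rw [integral_finsetSum _ fun k _ => integrable_finsetSum _ fun l _ => (hint k l).const_mul _]
  refine Finset.sum_congr rfl fun k _ => ?_
  rw [integral_finsetSum _ fun l _ => (hint k l).const_mul _]
  simp_rw [integral_const_mul]

theorem expectation_mul_mul_conjTranspose_general
    (N_r N_t m : ℕ)
    {Ω : Type*} [MeasurableSpace Ω] (μ : Measure Ω)
    (X : Ω → Matrix (Fin N_r × Fin m) (Fin N_t × Fin m) ℂ)
    (hdiag : ∀ ω, HasDiagonalBlocks (X ω))
    (hsq : ∀ u v, MemLp (fun ω => X ω u v) 2 μ)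
    (σ : ℝ)
    (hmom : ∀ (i j : Fin N_r) (k l : Fin N_t) (p : Fin m),
      ∫ ω, X ω (i, p) (k, p) * conj (X ω (j, p) (l, p)) ∂μ =
        if i = j ∧ k = l then ((σ : ℂ) ^ 2) else 0)
    (Z : Matrix (Fin N_t × Fin m) (Fin N_t × Fin m) ℂ) (hZ : HasDiagonalBlocks Z) :
    ∀ (i j : Fin N_r) (p q : Fin m),
      ∫ ω, (X ω * Z * (X ω)ᴴ) (i, p) (j, q) ∂μ =
        if i = j ∧ p = q then ((σ : ℂ) ^ 2) * ∑ k : Fin N_t, Z (k, p) (k, p) else 0 := by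
  intro i j p q
  simp only [fun ω => (hdiag ω).mul_mul_conjTranspose_apply hZ (hdiag ω) i j p q]
  by_cases hpq : p = q
  · subst hpq
    simp only [if_true, and_true,
      integral_sum_sum_mul_mul_conj (fun k => hsq (i, p) (k, p)) (fun l => hsq (j, p) (l, p)),
      hmom]
    by_cases hij : i = j
    · simp [hij, Finset.mul_sum, mul_comm]
    · simp [hij]
  · simp [hpq]

/-- For a random block matrix `X` with diagonal blocks and i.i.d.-type second
moments, `E[X Z Xᴴ] = σ² ∑ₖ (I ⊗ Z k k)` for every deterministic `Z` with
diagonal blocks. -/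
theorem expectation_mul_mul_conjTranspose
    (N_r N_t m : ℕ) (hNr : 0 < N_r) (hNt : 0 < N_t) (hm : 0 < m)
    {Ω : Type*} [MeasurableSpace Ω] (μ : Measure Ω) [IsProbabilityMeasure μ]
    (X : Ω → Matrix (Fin N_r × Fin m) (Fin N_t × Fin m) ℂ)
    (hdiag : ∀ ω, HasDiagonalBlocks (X ω))
    (hint : ∀ u v, Integrable (fun ω => X ω u v) μ)
    (hsq : ∀ u v, MemLp (fun ω => X ω u v) 2 μ)
    (σ : ℝ) (hσ : 0 ≤ σ)
    (hmom : ∀ (i j : Fin N_r) (k l : Fin N_t) (p : Fin m),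
      ∫ ω, X ω (i, p) (k, p) * conj (X ω (j, p) (l, p)) ∂μ =
        if i = j ∧ k = l then ((σ : ℂ) ^ 2) else 0)
    (Z : Matrix (Fin N_t × Fin m) (Fin N_t × Fin m) ℂ) (hZ : HasDiagonalBlocks Z) :
    ∀ (i j : Fin N_r) (p q : Fin m),
      ∫ ω, (X ω * Z * (X ω)ᴴ) (i, p) (j, q) ∂μ =
        if i = j ∧ p = q then ((σ : ℂ) ^ 2) * ∑ k : Fin N_t, Z (k, p) (k, p) else 0 :=
  expectation_mul_mul_conjTranspose_general N_r N_t m μ X hdiag hsq σ hmom Z hZ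
end
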